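/- arXiv:2207.05639 — 2 statements merged into one kernel-verified Lean document; each statement's English description precedes it below -/
import Mathlib

section
/- For every integer n ≥ 3, the positive co-degree Turán number of F₃,₃ satisfies 3·⌊n/5⌋ ≤ co⁺ex(n, F₃,₃) ≤ (3/4)·n. -/
open Finset

/-- The co-degree of a vertex set `S` in the hypergraph with edge set `E`:
the number of edges containing `S`. -/
def coDeg {n : ℕ} (E : Finset (Finset (Fin n))) (S : Finset (Fin n)) : ℕ :=
  (E.filter (fun e => S ⊆ e)).card

/-- The minimum positive co-degree `δ⁺_{r-1}` of an `r`-graph on `Fin n` with edge set `E`: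
the largest `k` such that every `(r-1)`-set of vertices contained in at least one edge is
contained in at least `k` edges (i.e. the minimum of the positive co-degrees). -/
noncomputable def minPosCoDeg (r n : ℕ) (E : Finset (Finset (Fin n))) : ℕ :=
  sInf {d : ℕ | ∃ S : Finset (Fin n), S.card = r - 1 ∧ coDeg E S = d ∧ 0 < d}

/-- `E` contains a copy of `F`: an injection of the vertices of `F` mapping
edges of `F` to edges of `E`. -/
def Contains {α β : Type*} [DecidableEq α] [DecidableEq β]
    (F : Finset (Finset α)) (E : Finset (Finset β)) : Prop :=
  ∃ f : α → β, Function.Injective f ∧ ∀ e ∈ F, e.image f ∈ E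

/-- The positive co-degree Turán number `co⁺ex_r(n, F)`: the maximum of the minimum positive
co-degree over all `F`-free `r`-graphs on `n` vertices with at least one edge. -/
noncomputable def coPlusEx {α : Type*} [DecidableEq α] (r n : ℕ) (F : Finset (Finset α)) : ℕ :=
  sSup {d : ℕ | ∃ E : Finset (Finset (Fin n)),
    (∀ e ∈ E, e.card = r) ∧ E.Nonempty ∧ ¬ Contains F E ∧ minPosCoDeg r n E = d}


def K4minus : Finset (Finset (Fin 4)) := {{0,1,2}, {0,1,3}, {0,2,3}}

def K4 : Finset (Finset (Fin 4)) := {{0,1,2}, {0,1,3}, {0,2,3}, {1,2,3}}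

def F5 : Finset (Finset (Fin 5)) := {{0,1,2}, {0,1,3}, {2,3,4}}

def F32 : Finset (Finset (Fin 5)) := {{0,1,2}, {0,3,4}, {1,3,4}, {2,3,4}}

def Fano : Finset (Finset (Fin 7)) :=
  {{0,1,2}, {2,3,4}, {0,4,5}, {1,3,5}, {0,3,6}, {1,4,6}, {2,5,6}}

def F33 : Finset (Finset (Fin 6)) :=
  {{0,1,2}, {0,3,4}, {0,3,5}, {0,4,5}, {1,3,4}, {1,3,5}, {1,4,5}, {2,3,4}, {2,3,5}, {2,4,5}}

def C5 : Finset (Finset (Fin 5)) := {{0,1,2}, {1,2,3}, {2,3,4}, {0,3,4}, {0,1,4}}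

def C5minus : Finset (Finset (Fin 5)) := {{0,1,2}, {1,2,3}, {2,3,4}, {0,3,4}}

def K222 : Finset (Finset (Fin 6)) :=
  {{0,2,4}, {0,2,5}, {0,3,4}, {0,3,5}, {1,2,4}, {1,2,5}, {1,3,4}, {1,3,5}}

/-- `J k`: the 3-graph on `k+1` vertices whose edges are all triples containing the
distinguished vertex `0`. -/
def Jgraph (k : ℕ) : Finset (Finset (Fin (k+1))) :=
  (Finset.univ.powersetCard 3).filter (fun e => (0 : Fin (k+1)) ∈ e)

/-- `E` is (isomorphic to) the complete balanced `k`-partite 3-graph on `n` vertices: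
there is a partition of the vertices into `k` classes whose sizes differ by at most one,
such that the edges are exactly the triples of vertices in three pairwise distinct classes. -/
def IsCompleteBalancedMultipartite (n k : ℕ) (E : Finset (Finset (Fin n))) : Prop :=
  ∃ f : Fin n → Fin k,
    (∀ i j : Fin k, (Finset.univ.filter (fun v => f v = i)).card ≤
      (Finset.univ.filter (fun v => f v = j)).card + 1) ∧
    ∀ e : Finset (Fin n), e ∈ E ↔ (e.card = 3 ∧ (e.image f).card = 3)

/-- The unique (6,3,2)-design `H₆`. -/
def H6 : Finset (Finset (Fin 6)) :=
  {{0,1,2}, {0,1,3}, {2,3,4}, {2,3,5}, {0,4,5}, {1,4,5}, {0,2,4}, {0,3,5}, {1,2,5}, {1,3,4}}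

/-- `E` is (isomorphic to) a balanced blow-up of `H₆` on `n` vertices: the vertices are
partitioned into six classes of equal size, and the edges are exactly the triples whose
three vertices lie in classes forming an edge of `H₆`. -/
def IsBalancedH6Blowup (n : ℕ) (E : Finset (Finset (Fin n))) : Prop :=
  ∃ f : Fin n → Fin 6,
    (∀ i j : Fin 6, (Finset.univ.filter (fun v => f v = i)).card =
      (Finset.univ.filter (fun v => f v = j)).card) ∧
    ∀ e : Finset (Fin n), e ∈ E ↔ (e.card = 3 ∧ e.image f ∈ H6)

/-!
Upper bound: if `δ⁺₂(H) > 3n/4`, any four nonempty pair links (each of size at least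
`δ⁺₂(H)`) share a vertex. Starting from an edge `xyz`, pick `u`, `v`, `w` successively in the common link of
`xy`, `xz`, `yz`, with `v` also in the link of `ux` and `w` in the link of `vu`; then `wvu` is
an edge, and together with `x`, `y`, `z` it spans a copy of `F₃,₃`.

Lower bound: the complete 5-partite 3-graph with classes of size `⌊n/5⌋` (other vertices
isolated) has all positive co-degrees at least `3⌊n/5⌋`. It is `F₃,₃`-free because every pair of
vertices of `F₃,₃` lies in an edge, so a copy would need six distinct classes.
-/

theorem Function.injective_of_forall_pair_mem_of_card_image {α β : Type*} [DecidableEq α]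
    [DecidableEq β] {F : Finset (Finset α)} {f : α → β}
    (hF : ∀ i j, i ≠ j → ∃ e ∈ F, i ∈ e ∧ j ∈ e)
    (hf : ∀ e ∈ F, (e.image f).card = e.card) : Function.Injective f := by
  intro i j hij
  by_contra hne
  obtain ⟨e, he, hi, hj⟩ := hF i j hne
  exact hne (card_image_iff.1 (hf e he) hi hj hij)

theorem Finset.card_add_card_le_card_inter_add_card_univ {α : Type*} [Fintype α]
    [DecidableEq α] (s t : Finset α) : s.card + t.card ≤ (s ∩ t).card + Fintype.card α := by
  have := card_le_univ (s ∪ t)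
  have := card_union_add_card_inter s t
  omega

theorem Finset.inter_inter_inter_nonempty_of_three_mul_card_lt {α : Type*} [Fintype α]
    [DecidableEq α] {s₁ s₂ s₃ s₄ : Finset α}
    (h : 3 * Fintype.card α < s₁.card + s₂.card + s₃.card + s₄.card) :
    (s₁ ∩ s₂ ∩ s₃ ∩ s₄).Nonempty := by
  have := card_add_card_le_card_inter_add_card_univ s₁ s₂
  have := card_add_card_le_card_inter_add_card_univ (s₁ ∩ s₂) s₃
  have := card_add_card_le_card_inter_add_card_univ (s₁ ∩ s₂ ∩ s₃) s₄
  exact card_pos.1 (by omega)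

theorem le_card_filter_val_div_eq {n k i : ℕ} (h : (i + 1) * k ≤ n) :
    k ≤ (univ.filter fun v : Fin n => v.val / k = i).card := by
  let f : Fin k → Fin n := fun j => Fin.castLE (add_one_mul i k ▸ h) (Fin.natAdd (i * k) j)
  have hf : Function.Injective f := (Fin.castLE_injective _).comp (Fin.natAdd_injective _ _)
  have hmaps : ∀ j ∈ (univ : Finset (Fin k)), f j ∈ univ.filter fun v : Fin n => v.val / k = i :=
    fun j _ => mem_filter.2
      ⟨mem_univ _, Nat.div_eq_of_lt_le (by simp [f]) (by simp [f, add_one_mul])⟩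
  simpa using card_le_card_of_injOn f hmaps hf.injOn

theorem Finset.pairwise_ne_of_card_eq_three {α : Type*} [DecidableEq α] {a b c : α}
    (h : ({a, b, c} : Finset α).card = 3) : a ≠ b ∧ a ≠ c ∧ b ≠ c := by
  refine ⟨?_, ?_, ?_⟩ <;> rintro rfl <;> simp at h <;>
    exact absurd h (card_le_two.trans_lt (by norm_num)).ne

theorem Finset.insert_insert_singleton_rotate {α : Type*} [DecidableEq α] (a b c : α) :
    ({a, b, c} : Finset α) = {b, c, a} := by
  rw [insert_comm, pair_comm]

theorem F33_covers_pairs : ∀ i j : Fin 6, i ≠ j → ∃ e ∈ F33, i ∈ e ∧ j ∈ e := by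
  decide

theorem card_of_mem_F33 : ∀ e ∈ F33, e.card = 3 := by
  decide

section CoDegree

variable {n : ℕ} {E : Finset (Finset (Fin n))}

def pairLink (E : Finset (Finset (Fin n))) (x y : Fin n) : Finset (Fin n) :=
  univ.filter fun w => {w, x, y} ∈ E

@[simp]
theorem mem_pairLink {x y w : Fin n} : w ∈ pairLink E x y ↔ {w, x, y} ∈ E := by
  simp [pairLink]

theorem filter_superset_pair_eq_image_pairLink (h3 : ∀ e ∈ E, e.card = 3) {x y : Fin n}
    (hxy : x ≠ y) :
    E.filter (fun e => {x, y} ⊆ e) = (pairLink E x y).image (insert · {x, y}) := by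
  ext e
  simp only [mem_filter, mem_image, mem_pairLink]
  constructor
  · rintro ⟨he, hxye⟩
    obtain ⟨w, hw⟩ := card_eq_one.1 (by
      rw [card_sdiff_of_subset hxye, h3 e he, card_pair hxy] : (e \ {x, y}).card = 1)
    have hwe : insert w {x, y} = e := by
      rw [insert_eq, ← hw, sdiff_union_of_subset hxye]
    exact ⟨w, hwe ▸ he, hwe⟩
  · rintro ⟨w, hw, rfl⟩
    exact ⟨hw, subset_insert _ _⟩

theorem card_pairLink (h3 : ∀ e ∈ E, e.card = 3) {x y : Fin n} (hxy : x ≠ y) :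
    (pairLink E x y).card = coDeg E {x, y} := by
  rw [coDeg, filter_superset_pair_eq_image_pairLink h3 hxy, card_image_of_injOn]
  intro w hw w' hw' hww'
  have hne := pairwise_ne_of_card_eq_three (h3 _ (mem_pairLink.1 hw))
  have : w ∈ ({w', x, y} : Finset (Fin n)) := by
    simp only at hww'; rw [← hww']; exact mem_insert_self _ _
  simp_all

theorem minPosCoDeg_le_coDeg {r : ℕ} {S : Finset (Fin n)} (hS : S.card = r - 1)
    (hpos : 0 < coDeg E S) : minPosCoDeg r n E ≤ coDeg E S :=
  Nat.sInf_le ⟨S, hS, rfl, hpos⟩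

theorem minPosCoDeg_le_card_pairLink (h3 : ∀ e ∈ E, e.card = 3) {x y : Fin n}
    (hne : (pairLink E x y).Nonempty) : minPosCoDeg 3 n E ≤ (pairLink E x y).card := by
  obtain ⟨w, hw⟩ := hne
  have hxy := (pairwise_ne_of_card_eq_three (h3 _ (mem_pairLink.1 hw))).2.2
  rw [card_pairLink h3 hxy]
  exact minPosCoDeg_le_coDeg (card_pair hxy) (card_pairLink h3 hxy ▸ card_pos.2 ⟨w, hw⟩)

theorem le_minPosCoDeg {r d : ℕ} {e : Finset (Fin n)} (he : e ∈ E) (her : e.card = r)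
    (h : ∀ S : Finset (Fin n), S.card = r - 1 → 0 < coDeg E S → d ≤ coDeg E S) :
    d ≤ minPosCoDeg r n E := by
  obtain ⟨S, hSe, hS⟩ := exists_subset_card_eq (show r - 1 ≤ e.card by omega)
  have hpos : 0 < coDeg E S := card_pos.2 ⟨e, mem_filter.2 ⟨he, hSe⟩⟩
  exact le_csInf ⟨_, S, hS, rfl, hpos⟩ fun _ ⟨S, hS, hd, hpos⟩ => hd ▸ h S hS (hd ▸ hpos)

theorem minPosCoDeg_le_card (r : ℕ) (E : Finset (Finset (Fin n))) :
    minPosCoDeg r n E ≤ E.card := by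
  rcases Nat.eq_zero_or_pos (minPosCoDeg r n E) with h | h
  · exact h ▸ Nat.zero_le _
  unfold minPosCoDeg at h ⊢
  obtain ⟨S, -, hS, -⟩ := Nat.sInf_mem (Nat.nonempty_of_pos_sInf h)
  rw [← hS]
  exact card_filter_le _ _

end CoDegree

theorem le_coPlusEx {α : Type*} [DecidableEq α] {r n : ℕ} {F : Finset (Finset α)}
    {E : Finset (Finset (Fin n))} (hr : ∀ e ∈ E, e.card = r) (hne : E.Nonempty)
    (hfree : ¬ Contains F E) : minPosCoDeg r n E ≤ coPlusEx r n F := by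
  refine le_csSup ⟨Fintype.card (Finset (Fin n)), ?_⟩ ⟨E, hr, hne, hfree, rfl⟩
  rintro _ ⟨E', -, -, -, rfl⟩
  exact (minPosCoDeg_le_card r E').trans (card_le_univ E')

theorem coPlusEx_le {α : Type*} [DecidableEq α] {r n d : ℕ} {F : Finset (Finset α)}
    (h : ∀ E : Finset (Finset (Fin n)), (∀ e ∈ E, e.card = r) → E.Nonempty → ¬ Contains F E →
      minPosCoDeg r n E ≤ d) : coPlusEx r n F ≤ d :=
  csSup_le' fun _ ⟨E, hr, hne, hfree, hd⟩ => hd ▸ h E hr hne hfree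

section UpperBound

variable {n : ℕ} {E : Finset (Finset (Fin n))}

def commonLink (E : Finset (Finset (Fin n))) (x y z : Fin n) : Finset (Fin n) :=
  pairLink E x y ∩ pairLink E x z ∩ pairLink E y z

theorem mem_commonLink {x y z t : Fin n} :
    t ∈ commonLink E x y z ↔ {t, x, y} ∈ E ∧ {t, x, z} ∈ E ∧ {t, y, z} ∈ E := by
  simp [commonLink]

theorem contains_F33_of_mem_commonLink {a b c x y z : Fin n} (h3 : ∀ e ∈ E, e.card = 3)
    (habc : {a, b, c} ∈ E) (ha : a ∈ commonLink E x y z) (hb : b ∈ commonLink E x y z)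
    (hc : c ∈ commonLink E x y z) : Contains F33 E := by
  rw [mem_commonLink] at ha hb hc
  have hmem : ∀ e ∈ F33, e.image ![a, b, c, x, y, z] ∈ E := by
    simp [F33, *]
  refine ⟨_, Function.injective_of_forall_pair_mem_of_card_image F33_covers_pairs ?_, hmem⟩
  intro e he
  rw [h3 _ (hmem e he), card_of_mem_F33 e he]

theorem exists_mem_commonLink_of_three_mul_lt (h3 : ∀ e ∈ E, e.card = 3)
    (hδ : 3 * n < 4 * minPosCoDeg 3 n E) {x y z a b : Fin n} (hxyz : {x, y, z} ∈ E)
    (hab : (pairLink E a b).Nonempty) : ∃ t ∈ commonLink E x y z, {t, a, b} ∈ E := by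
  have hxy : (pairLink E x y).Nonempty := ⟨z, by rwa [mem_pairLink, insert_insert_singleton_rotate]⟩
  have hxz : (pairLink E x z).Nonempty := ⟨y, by rwa [mem_pairLink, insert_comm]⟩
  have hyz : (pairLink E y z).Nonempty := ⟨x, mem_pairLink.2 hxyz⟩
  have := minPosCoDeg_le_card_pairLink h3 hxy
  have := minPosCoDeg_le_card_pairLink h3 hxz
  have := minPosCoDeg_le_card_pairLink h3 hyz
  have := minPosCoDeg_le_card_pairLink h3 hab
  obtain ⟨t, ht⟩ := inter_inter_inter_nonempty_of_three_mul_card_lt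
    (s₁ := pairLink E x y) (s₂ := pairLink E x z)
    (s₃ := pairLink E y z) (s₄ := pairLink E a b) (by rw [Fintype.card_fin]; omega)
  exact ⟨t, (mem_inter.1 ht).1, mem_pairLink.1 (mem_inter.1 ht).2⟩

theorem four_mul_minPosCoDeg_le (h3 : ∀ e ∈ E, e.card = 3) (hne : E.Nonempty)
    (hfree : ¬ Contains F33 E) : 4 * minPosCoDeg 3 n E ≤ 3 * n := by
  by_contra! hδ
  obtain ⟨e, he⟩ := hne
  obtain ⟨x, y, z, -, -, -, rfl⟩ := card_eq_three.1 (h3 e he)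
  obtain ⟨u, hu, -⟩ := exists_mem_commonLink_of_three_mul_lt h3 hδ he ⟨x, mem_pairLink.2 he⟩
  have hyux : {y, u, x} ∈ E := by
    rw [← insert_insert_singleton_rotate, ← insert_insert_singleton_rotate]
    exact (mem_commonLink.1 hu).1
  obtain ⟨v, hv, hvux⟩ := exists_mem_commonLink_of_three_mul_lt h3 hδ he ⟨y, mem_pairLink.2 hyux⟩
  have hxvu : {x, v, u} ∈ E := by rwa [insert_insert_singleton_rotate]
  obtain ⟨w, hw, hwvu⟩ := exists_mem_commonLink_of_three_mul_lt h3 hδ he ⟨x, mem_pairLink.2 hxvu⟩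
  exact hfree (contains_F33_of_mem_commonLink h3 hwvu hw hv hu)

end UpperBound

section LowerBound

variable {n : ℕ}

/-- The complete `m`-partite 3-graph with classes `p ⁻¹' {i}`, `i < m`; vertices with `m ≤ p v`
are isolated. -/
def completeMultipartite (p : Fin n → ℕ) (m : ℕ) : Finset (Finset (Fin n)) :=
  (univ.powersetCard 3).filter fun e => (∀ v ∈ e, p v < m) ∧ (e.image p).card = 3

variable {p : Fin n → ℕ} {m : ℕ}

theorem card_of_mem_completeMultipartite {e : Finset (Fin n)}
    (he : e ∈ completeMultipartite p m) : e.card = 3 :=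
  (mem_powersetCard_univ.1 (mem_filter.1 he).1)

theorem insert_insert_singleton_mem_completeMultipartite {a b c : Fin n} :
    {a, b, c} ∈ completeMultipartite p m ↔
      p a < m ∧ p b < m ∧ p c < m ∧ p a ≠ p b ∧ p a ≠ p c ∧ p b ≠ p c := by
  rw [completeMultipartite, mem_filter, mem_powersetCard_univ, image_insert, image_insert,
    image_singleton]
  constructor
  · rintro ⟨-, hlt, himg⟩
    simp only [mem_insert, mem_singleton, forall_eq_or_imp, forall_eq] at hlt
    exact ⟨hlt.1, hlt.2.1, hlt.2.2, pairwise_ne_of_card_eq_three himg⟩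
  · rintro ⟨ha, hb, hc, hab, hac, hbc⟩
    refine ⟨card_eq_three.2 ⟨a, b, c, ?_, ?_, ?_, rfl⟩, by simp [ha, hb, hc],
      card_eq_three.2 ⟨_, _, _, hab, hac, hbc, rfl⟩⟩ <;> rintro rfl <;> contradiction

theorem lt_of_mem_of_mem_completeMultipartite {e : Finset (Fin n)} {v : Fin n}
    (he : e ∈ completeMultipartite p m) (hv : v ∈ e) : p v < m :=
  (mem_filter.1 he).2.1 v hv

theorem not_contains_F33_completeMultipartite (hm : m ≤ 5) :
    ¬ Contains F33 (completeMultipartite p m) := by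
  rintro ⟨f, -, hmap⟩
  have hinj : Function.Injective (p ∘ f) := by
    refine Function.injective_of_forall_pair_mem_of_card_image F33_covers_pairs fun e he => ?_
    rw [← image_image, card_of_mem_F33 e he]
    exact (mem_filter.1 (hmap e he)).2.2
  have hlt : ∀ i, p (f i) < m := fun i => by
    obtain ⟨e, he, hi, -⟩ := F33_covers_pairs i (i + 1) (by simp)
    exact lt_of_mem_of_mem_completeMultipartite (hmap e he) (mem_image_of_mem f hi)
  have := card_le_card_of_injOn (p ∘ f) (s := univ) (t := range m)
    (fun i _ => mem_range.2 (hlt i)) hinj.injOn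
  simp only [card_univ, Fintype.card_fin, card_range] at this
  omega

theorem mul_le_coDeg_completeMultipartite {k : ℕ}
    (hpart : ∀ i < m, k ≤ (univ.filter fun v => p v = i).card) {S : Finset (Fin n)}
    (hS : S.card = 2) (hpos : 0 < coDeg (completeMultipartite p m) S) :
    (m - 2) * k ≤ coDeg (completeMultipartite p m) S := by
  obtain ⟨x, y, hxy, rfl⟩ := card_eq_two.1 hS
  have h3 : ∀ e ∈ completeMultipartite p m, e.card = 3 := fun _ => card_of_mem_completeMultipartite
  rw [← card_pairLink h3 hxy] at hpos ⊢
  obtain ⟨w, hw⟩ := card_pos.1 hpos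
  obtain ⟨-, hx, hy, -, -, hpxy⟩ :=
    insert_insert_singleton_mem_completeMultipartite.1 (mem_pairLink.1 hw)
  set I := ((range m).erase (p x)).erase (p y)
  have hI : I.card = m - 2 := by
    rw [card_erase_of_mem (by simp [hpxy.symm, hy]), card_erase_of_mem (by simp [hx]), card_range]
    omega
  set W := univ.filter fun v => p v ∈ I
  have hW : W ⊆ pairLink (completeMultipartite p m) x y := fun v hv => by
    simp only [W, I, mem_filter, mem_erase, mem_range] at hv
    exact mem_pairLink.2 (insert_insert_singleton_mem_completeMultipartite.2
      ⟨hv.2.2.2, hx, hy, hv.2.2.1, hv.2.1, hpxy⟩)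
  have hfiber : ∀ i ∈ I, W.filter (fun v => p v = i) = univ.filter fun v => p v = i := by
    intro i hi
    ext v
    simp only [W, mem_filter, mem_univ, true_and, and_iff_right_iff_imp]
    exact fun hv => hv ▸ hi
  calc (m - 2) * k = I.card • k := by rw [hI, smul_eq_mul]
    _ ≤ ∑ i ∈ I, (W.filter fun v => p v = i).card := card_nsmul_le_sum _ _ _ fun i hi => by
        rw [hfiber i hi]
        exact hpart i (mem_range.1 (mem_erase.1 (mem_erase.1 hi).2).2)
    _ = W.card := (card_eq_sum_card_fiberwise fun v hv => (mem_filter.1 hv).2).symm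
    _ ≤ _ := card_le_card hW

theorem completeMultipartite_nonempty {k : ℕ} (hk : 0 < k) (hm : 3 ≤ m)
    (hpart : ∀ i < m, k ≤ (univ.filter fun v => p v = i).card) :
    (completeMultipartite p m).Nonempty := by
  have hrep : ∀ i < m, ∃ v, p v = i := fun i hi => by
    obtain ⟨v, hv⟩ := card_pos.1 (hk.trans_le (hpart i hi))
    exact ⟨v, (mem_filter.1 hv).2⟩
  obtain ⟨a, ha⟩ := hrep 0 (by omega)
  obtain ⟨b, hb⟩ := hrep 1 (by omega)
  obtain ⟨c, hc⟩ := hrep 2 (by omega)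
  have habc : {a, b, c} ∈ completeMultipartite p m := by
    rw [insert_insert_singleton_mem_completeMultipartite, ha, hb, hc]
    omega
  exact ⟨_, habc⟩

theorem mul_le_minPosCoDeg_completeMultipartite {k : ℕ}
    (hpart : ∀ i < m, k ≤ (univ.filter fun v => p v = i).card) :
    (m - 2) * k ≤ minPosCoDeg 3 n (completeMultipartite p m) := by
  by_cases h : (m - 2) * k = 0
  · exact h ▸ Nat.zero_le _
  obtain ⟨hm, hk⟩ := mul_ne_zero_iff.1 h
  obtain ⟨e, he⟩ := completeMultipartite_nonempty (Nat.pos_of_ne_zero hk) (by omega) hpart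
  exact le_minPosCoDeg he (card_of_mem_completeMultipartite he)
    fun S hS hpos => mul_le_coDeg_completeMultipartite hpart hS hpos

end LowerBound

theorem coPlusEx_F33_general (n : ℕ) :
    3 * (n / 5) ≤ coPlusEx 3 n F33 ∧ (coPlusEx 3 n F33 : ℝ) ≤ 3 / 4 * n := by
  constructor
  · rcases Nat.eq_zero_or_pos (n / 5) with hk | hk
    · simp [hk]
    have hpart : ∀ i < 5, n / 5 ≤ (univ.filter fun v : Fin n => v.val / (n / 5) = i).card :=
      fun i hi => le_card_filter_val_div_eq (by nlinarith [Nat.div_mul_le_self n 5])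
    exact (mul_le_minPosCoDeg_completeMultipartite hpart).trans
      (le_coPlusEx (fun _ => card_of_mem_completeMultipartite)
        (completeMultipartite_nonempty hk (by norm_num) hpart)
        (not_contains_F33_completeMultipartite le_rfl))
  · have : coPlusEx 3 n F33 ≤ 3 * n / 4 := coPlusEx_le fun _ h3 hne hfree =>
      (Nat.le_div_iff_mul_le (by norm_num)).2 (by linarith [four_mul_minPosCoDeg_le h3 hne hfree])
    calc (coPlusEx 3 n F33 : ℝ) ≤ ((3 * n / 4 : ℕ) : ℝ) := by exact_mod_cast this
      _ ≤ ((3 * n : ℕ) : ℝ) / (4 : ℕ) := Nat.cast_div_le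
      _ = 3 / 4 * n := by push_cast; ring

/-- For every `n ≥ 3`, `3·⌊n/5⌋ ≤ co⁺ex(n, F₃,₃) ≤ (3/4)·n`. -/
theorem coPlusEx_F33 (n : ℕ) (hn : 3 ≤ n) :
    3 * (n / 5) ≤ coPlusEx 3 n F33 ∧ (coPlusEx 3 n F33 : ℝ) ≤ 3 / 4 * n :=
  coPlusEx_F33_general n
end

section
/- Let F be a 3-graph with at least one edge. If F is 3-partite, then there exist constants ε > 0 and C > 0 such that co⁺ex(n, F) ≤ C·n^{1−ε} for all n ≥ 3. If F is not 3-partite, then co⁺ex(n, F) ≥ ⌊n/3⌋ for all n ≥ 3; in particular co⁺ex(n, F) = Θ(n) in this case. -/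
open Finset

/-!
A 3-partite `F` on `s` vertices embeds in the complete 3-partite 3-graph `K(s,s,s)`, so it is
enough to find `K(s,s,s)` in any 3-graph `H` on `n` vertices with `δ₂⁺(H) = d ≥ C n^{1-ε}`.
Fix a pair `{y, x}` of positive co-degree. Each `w` in its link gives a pair `{x, w}` of positive
co-degree, so there are at least `d²` ordered pairs `(w, v)` with `{x, w, v} ∈ H`, and each of
them has a link of size at least `d`. Averaging over `s`-sets yields an `s`-set `X` lying in the
links of many pairs `(w, v)`; the graph of these pairs is dense enough for the Kővári–Sós–Turán
count to find a `K_{s,s}` with parts `Y, Z` in it, and `X, Y, Z` span a `K(s,s,s)` in `H`.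

If `F` is not 3-partite, the triples meeting all three residue classes mod 3 form an `F`-free
3-graph in which a pair inside an edge extends by every vertex of the third class.
-/

namespace Nat

theorem choose_mul_le_choose_mul {s D x : ℕ} (hs : 1 ≤ s) (hDx : D ≤ x) :
    D.choose s * x ≤ x.choose s * D := by
  obtain ⟨c, rfl⟩ : ∃ c, s = c + 1 := ⟨s - 1, by omega⟩
  rcases D with _ | b
  · simp
  obtain ⟨a, rfl⟩ : ∃ a, x = a + 1 := ⟨x - 1, by omega⟩
  have hmono : b.choose c ≤ a.choose c := Nat.choose_le_choose c (by omega)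
  refine Nat.le_of_mul_le_mul_right (?_ : _ * (c + 1) ≤ _ * (c + 1)) c.succ_pos
  calc (b + 1).choose (c + 1) * (a + 1) * (c + 1)
      = (b + 1) * b.choose c * (a + 1) := by rw [add_one_mul_choose_eq]; ring
    _ ≤ (b + 1) * a.choose c * (a + 1) := by gcongr
    _ = (a + 1).choose (c + 1) * (b + 1) * (c + 1) := by
        rw [mul_right_comm _ (b + 1), ← add_one_mul_choose_eq]; ring

theorem pow_mul_choose_le_choose_mul_pow (a b s : ℕ) :
    (a + 1 - s) ^ s * b.choose s ≤ a.choose s * b ^ s := by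
  refine Nat.le_of_mul_le_mul_right (?_ : _ * s ! ≤ _ * s !) s.factorial_pos
  calc (a + 1 - s) ^ s * b.choose s * s ! = (a + 1 - s) ^ s * b.descFactorial s := by
        rw [descFactorial_eq_factorial_mul_choose]; ring
    _ ≤ a.descFactorial s * b ^ s := by
        gcongr
        · exact pow_sub_le_descFactorial a s
        · exact descFactorial_le_pow b s
    _ = a.choose s * b ^ s * s ! := by rw [descFactorial_eq_factorial_mul_choose]; ring

theorem pow_add_two_le_of_mul_mul_choose_le {s n d p : ℕ} (h2s : 2 * s ≤ d) (hsn : s ≤ n)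
    (hp : d * d * d.choose s ≤ p * n.choose s) : d ^ (s + 2) ≤ 2 ^ s * p * n ^ s := by
  refine Nat.le_of_mul_le_mul_right (?_ : _ * n.choose s ≤ _ * n.choose s) (choose_pos hsn)
  calc d ^ (s + 2) * n.choose s ≤ d * d * (2 * (d + 1 - s)) ^ s * n.choose s := by
        rw [pow_add, mul_comm (d ^ s), sq]; gcongr; omega
    _ = 2 ^ s * (d * d) * ((d + 1 - s) ^ s * n.choose s) := by ring
    _ ≤ 2 ^ s * (d * d) * (d.choose s * n ^ s) :=
        Nat.mul_le_mul_left _ (pow_mul_choose_le_choose_mul_pow d n s)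
    _ = 2 ^ s * n ^ s * (d * d * d.choose s) := by ring
    _ ≤ 2 ^ s * n ^ s * (p * n.choose s) := by gcongr
    _ = 2 ^ s * p * n ^ s * n.choose s := by ring

theorem mul_pow_le_mul_pow_sub {s n a : ℕ} (hs : 1 ≤ s) (hsn : s ≤ n)
    (h : 2 ^ s * s * n ^ (s - 1) ≤ a ^ s) : s * n ^ s ≤ n * (a - s) ^ s := by
  obtain ⟨t, rfl⟩ : ∃ t, s = t + 1 := ⟨s - 1, by omega⟩
  rw [Nat.add_sub_cancel] at h
  have h2sa : 2 * (t + 1) ≤ a := by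
    refine (Nat.pow_le_pow_iff_left t.succ_ne_zero).1 (le_trans ?_ h)
    calc (2 * (t + 1)) ^ (t + 1) = 2 ^ (t + 1) * (t + 1) * (t + 1) ^ t := by
          rw [mul_pow, pow_succ (t + 1)]; ring
      _ ≤ 2 ^ (t + 1) * (t + 1) * n ^ t := by gcongr
  have hroot : (t + 1) * n ^ t ≤ (a - (t + 1)) ^ (t + 1) := by
    refine Nat.le_of_mul_le_mul_left (?_ : 2 ^ (t + 1) * _ ≤ 2 ^ (t + 1) * _) (by positivity)
    calc 2 ^ (t + 1) * ((t + 1) * n ^ t) ≤ a ^ (t + 1) := by rw [← mul_assoc]; exact h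
      _ ≤ (2 * (a - (t + 1))) ^ (t + 1) := by gcongr; omega
      _ = 2 ^ (t + 1) * (a - (t + 1)) ^ (t + 1) := mul_pow _ _ _
  calc (t + 1) * n ^ (t + 1) = n * ((t + 1) * n ^ t) := by ring
    _ ≤ n * (a - (t + 1)) ^ (t + 1) := by gcongr

/-- `hdense` says `d ^ (s (s + 2)) ≥ 2 ^ (s (s + 2)) s n ^ (s (s + 2) - 1)`. It makes the
`p ≥ d² C(d, s) / C(n, s)` ordered pairs dense enough for `exists_biclique_of_le_sum_card`
with `D = p / (2 n)`. -/
theorem mul_pow_le_mul_pow_div {s n d p : ℕ} (hs : 1 ≤ s) (h2s : 2 * s ≤ d) (hdn : d ≤ n)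
    (hdense : 2 ^ s * s * n ^ (s - 1) * (2 ^ (s + 1) * n ^ (s + 1)) ^ s ≤ (d ^ (s + 2)) ^ s)
    (hp : d * d * d.choose s ≤ p * n.choose s) :
    s * n ^ s ≤ n * (p / (2 * n) + 1 - s) ^ s := by
  have hsn : s ≤ n := by omega
  set a := p / (2 * n) + 1
  have hpa : p ≤ 2 * n * a := (Nat.lt_mul_div_succ p (by omega : 0 < 2 * n)).le
  have hda : d ^ (s + 2) ≤ 2 ^ (s + 1) * n ^ (s + 1) * a :=
    calc d ^ (s + 2) ≤ 2 ^ s * p * n ^ s := pow_add_two_le_of_mul_mul_choose_le h2s hsn hp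
      _ ≤ 2 ^ s * (2 * n * a) * n ^ s := by gcongr
      _ = 2 ^ (s + 1) * n ^ (s + 1) * a := by ring
  have hA : 0 < (2 ^ (s + 1) * n ^ (s + 1)) ^ s := by
    have : 0 < n := by omega
    positivity
  refine mul_pow_le_mul_pow_sub hs hsn (Nat.le_of_mul_le_mul_right ?_ hA)
  calc 2 ^ s * s * n ^ (s - 1) * (2 ^ (s + 1) * n ^ (s + 1)) ^ s ≤ (d ^ (s + 2)) ^ s := hdense
    _ ≤ (2 ^ (s + 1) * n ^ (s + 1) * a) ^ s := by gcongr
    _ = a ^ s * (2 ^ (s + 1) * n ^ (s + 1)) ^ s := by rw [mul_pow, mul_comm]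

end Nat

/-- A weak Jensen inequality for `C(·, s)`: the indices with `x i ≥ D` carry at least half of the
total, and on them `C(x i, s) / x i ≥ C(D, s) / D`. -/
theorem Finset.card_mul_choose_le_sum_choose {ι : Type*} (I : Finset ι) (x : ι → ℕ) {s D : ℕ}
    (hs : 1 ≤ s) (hD : 2 * #I * D ≤ ∑ i ∈ I, x i) :
    #I * D.choose s ≤ ∑ i ∈ I, (x i).choose s := by
  rcases Nat.eq_zero_or_pos D with rfl | hDpos
  · simp [Nat.choose_eq_zero_of_lt hs]
  have hlow : ∑ i ∈ I with x i < D, x i ≤ #I * D :=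
    (sum_le_card_nsmul _ _ _ fun i hi => (mem_filter.1 hi).2.le).trans
      (Nat.mul_le_mul_right _ (card_filter_le _ _))
  have hhigh : #I * D ≤ ∑ i ∈ I with ¬ x i < D, x i := by
    have := sum_filter_add_sum_filter_not I (fun i => x i < D) x
    rw [mul_assoc] at hD
    omega
  refine Nat.le_of_mul_le_mul_right (?_ : _ * D ≤ _ * D) hDpos
  calc #I * D.choose s * D ≤ D.choose s * ∑ i ∈ I with ¬ x i < D, x i := by
        rw [mul_right_comm, mul_comm]; gcongr
    _ = ∑ i ∈ I with ¬ x i < D, D.choose s * x i := mul_sum _ _ _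
    _ ≤ ∑ i ∈ I with ¬ x i < D, (x i).choose s * D :=
        sum_le_sum fun i hi => Nat.choose_mul_le_choose_mul hs (not_lt.1 (mem_filter.1 hi).2)
    _ ≤ (∑ i ∈ I, (x i).choose s) * D := by
        rw [← sum_mul]; gcongr; exact filter_subset _ _

theorem Finset.exists_sum_choose_le_card_filter_mul {ι V : Type*} [Fintype V] [DecidableEq V]
    (I : Finset ι) (J : ι → Finset V) {s : ℕ} (hs : s ≤ Fintype.card V) :
    ∃ T : Finset V, #T = s ∧
      ∑ i ∈ I, (#(J i)).choose s ≤ #{i ∈ I | T ⊆ J i} * (Fintype.card V).choose s := by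
  set 𝒯 := (univ : Finset V).powersetCard s
  have h𝒯 : #𝒯 = (Fintype.card V).choose s := by simp [𝒯]
  have hdouble : ∑ T ∈ 𝒯, #{i ∈ I | T ⊆ J i} = ∑ i ∈ I, (#(J i)).choose s := by
    refine (sum_card_bipartiteAbove_eq_sum_card_bipartiteBelow (fun T i => T ⊆ J i)).trans ?_
    refine sum_congr rfl fun i _ => ?_
    rw [← card_powersetCard]
    congr 1
    ext T
    simp [bipartiteBelow, 𝒯, and_comm]
  obtain ⟨T, hT, hle⟩ := exists_le_of_sum_le (s := 𝒯)
    (f := fun _ => ∑ i ∈ I, (#(J i)).choose s)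
    (g := fun T => #{i ∈ I | T ⊆ J i} * (Fintype.card V).choose s)
    (by rw [← card_pos, h𝒯]; exact Nat.choose_pos hs)
    (by rw [sum_const, ← sum_mul, hdouble, h𝒯, smul_eq_mul, mul_comm])
  exact ⟨T, (mem_powersetCard.1 hT).2, hle⟩

/-- The Kővári–Sós–Turán count for the bipartite graph with neighbourhoods `N a`. -/
theorem exists_biclique_of_le_sum_card {α β : Type*} [Fintype α] [Fintype β] [DecidableEq β]
    (N : α → Finset β) {s D : ℕ} (hs : 1 ≤ s) (hsβ : s ≤ Fintype.card β)
    (hD : 2 * Fintype.card α * D ≤ ∑ a, #(N a))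
    (hnum : s * Fintype.card β ^ s ≤ Fintype.card α * (D + 1 - s) ^ s) :
    ∃ T : Finset β, #T = s ∧ ∃ Z : Finset α, #Z = s ∧ ∀ a ∈ Z, T ⊆ N a := by
  set n := Fintype.card β
  have hjensen := card_mul_choose_le_sum_choose univ (fun a => #(N a)) hs (by simpa using hD)
  obtain ⟨T, hT, hpigeon⟩ := exists_sum_choose_le_card_filter_mul univ N hsβ
  have hA : s ≤ #{a | T ⊆ N a} := by
    refine Nat.le_of_mul_le_mul_right (?_ : _ * (n.choose s * n ^ s) ≤ _ * _)
      (Nat.mul_pos (Nat.choose_pos hsβ) (pow_pos (hs.trans hsβ) s))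
    calc s * (n.choose s * n ^ s) = s * n ^ s * n.choose s := by ring
      _ ≤ Fintype.card α * ((D + 1 - s) ^ s * n.choose s) := by
          rw [← mul_assoc]; gcongr
      _ ≤ Fintype.card α * (D.choose s * n ^ s) :=
          Nat.mul_le_mul_left _ (Nat.pow_mul_choose_le_choose_mul_pow D n s)
      _ ≤ (∑ a, (#(N a)).choose s) * n ^ s := by
          rw [← mul_assoc]; gcongr; simpa using hjensen
      _ ≤ #{a | T ⊆ N a} * (n.choose s * n ^ s) := by
          rw [← mul_assoc]; gcongr
  obtain ⟨Z, hZA, hZ⟩ := exists_subset_card_eq hA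
  exact ⟨T, hT, Z, hZ, fun a ha => (mem_filter.1 (hZA ha)).2⟩

section Link

variable {V : Type*} [Fintype V] [DecidableEq V]

def link (E : Finset (Finset V)) (S : Finset V) : Finset V :=
  {v | v ∉ S ∧ insert v S ∈ E}

@[simp]
theorem mem_link {E : Finset (Finset V)} {S : Finset V} {v : V} :
    v ∈ link E S ↔ v ∉ S ∧ insert v S ∈ E := by
  simp [link]

variable {E : Finset (Finset V)}

theorem ne_of_mem_link (h3 : ∀ e ∈ E, #e = 3) {a b v : V} (hv : v ∈ link E {a, b}) :
    a ≠ b := by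
  rintro rfl
  have := h3 _ (mem_link.1 hv).2
  have := card_insert_le v ({a, a} : Finset V)
  simp_all

theorem mem_link_rotate (h3 : ∀ e ∈ E, #e = 3) {a b v : V} (h : v ∈ link E {a, b}) :
    a ∈ link E {b, v} := by
  have hab := ne_of_mem_link h3 h
  simp only [mem_link, mem_insert, mem_singleton, not_or] at h ⊢
  refine ⟨⟨hab, fun hav => h.1.1 hav.symm⟩, ?_⟩
  convert h.2 using 1
  ext; simp only [mem_insert, mem_singleton]; tauto

theorem exists_link_nonempty (h3 : ∀ e ∈ E, #e = 3) (hE : E.Nonempty) :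
    ∃ a b : V, (link E {a, b}).Nonempty := by
  obtain ⟨e, he⟩ := hE
  obtain ⟨v, a, b, hva, hvb, -, rfl⟩ := card_eq_three.1 (h3 e he)
  exact ⟨a, b, v, mem_link.2 ⟨by simp [hva, hvb], he⟩⟩

theorem mul_mul_choose_le_sum_choose_card_link (h3 : ∀ e ∈ E, #e = 3) (hE : E.Nonempty) {d : ℕ}
    (hd : ∀ a b : V, (link E {a, b}).Nonempty → d ≤ #(link E {a, b})) (s : ℕ) :
    d * d * d.choose s ≤ ∑ p : V × V, (#(link E {p.1, p.2})).choose s := by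
  obtain ⟨y, x, hyx⟩ := exists_link_nonempty h3 hE
  calc d * d * d.choose s ≤ ∑ _w ∈ link E {y, x}, d * d.choose s := by
        rw [sum_const, smul_eq_mul, mul_assoc]; gcongr; exact hd y x hyx
    _ ≤ ∑ w ∈ link E {y, x}, ∑ _v ∈ link E {x, w}, d.choose s := by
        gcongr with w hw
        rw [sum_const, smul_eq_mul]; gcongr
        exact hd x w ⟨y, mem_link_rotate h3 hw⟩
    _ ≤ ∑ w ∈ link E {y, x}, ∑ v ∈ link E {x, w}, (#(link E {w, v})).choose s := by
        gcongr with w hw v hv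
        exact hd w v ⟨x, mem_link_rotate h3 hv⟩
    _ ≤ ∑ w, ∑ v, (#(link E {w, v})).choose s := by
        refine (sum_le_sum fun w _ => ?_).trans (sum_le_univ_sum_of_nonneg fun _ => Nat.zero_le _)
        exact sum_le_univ_sum_of_nonneg fun _ => Nat.zero_le _
    _ = ∑ p : V × V, (#(link E {p.1, p.2})).choose s :=
        (Fintype.sum_prod_type fun p : V × V => (#(link E {p.1, p.2})).choose s).symm

theorem exists_completeTripartite_of_le_card_link (h3 : ∀ e ∈ E, #e = 3) (hE : E.Nonempty)
    {d s : ℕ} (hd : ∀ a b : V, (link E {a, b}).Nonempty → d ≤ #(link E {a, b}))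
    (hs : 1 ≤ s) (h2s : 2 * s ≤ d)
    (hdense : 2 ^ s * s * Fintype.card V ^ (s - 1) *
      (2 ^ (s + 1) * Fintype.card V ^ (s + 1)) ^ s ≤ (d ^ (s + 2)) ^ s) :
    ∃ X Y Z : Finset V, #X = s ∧ #Y = s ∧ #Z = s ∧
      Disjoint X Y ∧ Disjoint X Z ∧ Disjoint Y Z ∧
      ∀ x ∈ X, ∀ y ∈ Y, ∀ z ∈ Z, {x, y, z} ∈ E := by
  set n := Fintype.card V
  have hdn : d ≤ n := by
    obtain ⟨a, b, hab⟩ := exists_link_nonempty h3 hE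
    exact (hd a b hab).trans (card_le_univ _)
  have hsn : s ≤ n := by omega
  obtain ⟨X, hX, hpigeon⟩ :=
    exists_sum_choose_le_card_filter_mul univ (fun p : V × V => link E {p.1, p.2}) hsn
  set N : V → Finset V := fun w => {v | X ⊆ link E {w, v}}
  have hcount : #{p ∈ (univ : Finset (V × V)) | X ⊆ link E {p.1, p.2}} = ∑ w, #(N w) := by
    simp only [N, card_filter, Fintype.sum_prod_type]
  have hp : d * d * d.choose s ≤ (∑ w, #(N w)) * n.choose s :=
    (mul_mul_choose_le_sum_choose_card_link h3 hE hd s).trans (hcount ▸ hpigeon)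
  obtain ⟨Y, hY, Z, hZ, hZY⟩ := exists_biclique_of_le_sum_card N hs hsn
    (Nat.mul_div_le _ _) (Nat.mul_pow_le_mul_pow_div hs h2s hdn hdense hp)
  have hlink : ∀ y ∈ Y, ∀ z ∈ Z, X ⊆ link E {z, y} := fun y hy z hz =>
    (mem_filter.1 (hZY z hz hy)).2
  obtain ⟨x₀, hx₀⟩ := card_pos.1 (hX ▸ hs : 0 < #X)
  obtain ⟨y₀, hy₀⟩ := card_pos.1 (hY ▸ hs : 0 < #Y)
  obtain ⟨z₀, hz₀⟩ := card_pos.1 (hZ ▸ hs : 0 < #Z)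
  refine ⟨X, Y, Z, hX, hY, hZ, disjoint_left.2 fun v hvX hvY => ?_,
    disjoint_left.2 fun v hvX hvZ => ?_, disjoint_left.2 fun v hvY hvZ => ?_,
    fun x hx y hy z hz => ?_⟩
  · simpa using (mem_link.1 (hlink v hvY z₀ hz₀ hvX)).1
  · simpa using (mem_link.1 (hlink y₀ hy₀ v hvZ hvX)).1
  · exact ne_of_mem_link h3 (hlink v hvY v hvZ hx₀) rfl
  · have := (mem_link.1 (hlink y hy z hz hx)).2
    rwa [pair_comm] at this

end Link

theorem Fin.univ_image_three {β : Type*} [DecidableEq β] (u : Fin 3 → β) :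
    univ.image u = {u 0, u 1, u 2} := by
  ext; simp [Fin.exists_fin_succ, eq_comm]

theorem contains_of_completeTripartite {α V : Type*} [Fintype α] [DecidableEq α] [DecidableEq V]
    {F : Finset (Finset α)} (hF3 : ∀ e ∈ F, #e = 3) {f : α → Fin 3}
    (hf : ∀ e ∈ F, #(e.image f) = 3) {E : Finset (Finset V)} {X Y Z : Finset V}
    (hX : Fintype.card α ≤ #X) (hY : Fintype.card α ≤ #Y) (hZ : Fintype.card α ≤ #Z)
    (hXY : Disjoint X Y) (hXZ : Disjoint X Z) (hYZ : Disjoint Y Z)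
    (hE : ∀ x ∈ X, ∀ y ∈ Y, ∀ z ∈ Z, {x, y, z} ∈ E) : Contains F E := by
  set P : Fin 3 → Finset V := ![X, Y, Z]
  have hP : ∀ i j, i ≠ j → Disjoint (P i) (P j) := by
    intro i j
    fin_cases i <;> fin_cases j <;> simp [P, hXY, hXZ, hYZ, hXY.symm, hXZ.symm, hYZ.symm]
  have hPcard : ∀ i, Fintype.card α ≤ #(P i) := by
    intro i; fin_cases i <;> assumption
  have hemb : ∀ i, ∃ g : α ↪ V, ∀ a, g a ∈ P i := fun i => by
    obtain ⟨g⟩ :=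
      Function.Embedding.nonempty_of_card_le (α := α) (β := P i) (by simpa using hPcard i)
    exact ⟨g.trans (Function.Embedding.subtype _), fun a => (g a).2⟩
  choose g hg using hemb
  set h : α → V := fun a => g (f a) a
  have hinj : Function.Injective h := by
    intro a b hab
    have hfab : f a = f b := by
      by_contra hne
      exact disjoint_left.1 (hP _ _ hne) (hg _ a) (by simpa only [h, hab] using hg _ b)
    simp only [h, hfab] at hab
    exact (g (f b)).injective hab
  refine ⟨h, hinj, fun e he => ?_⟩
  have hsurj : e.image f = univ := eq_univ_of_card _ (by simpa using hf e he)
  choose a hae hfa using fun i => mem_image.1 (hsurj ▸ mem_univ i)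
  have ha : Function.Injective a := fun i j hij => by rw [← hfa i, ← hfa j, hij]
  have he_eq : e = univ.image a := by
    refine (eq_of_subset_of_card_le (fun v hv => ?_) ?_).symm
    · obtain ⟨i, -, rfl⟩ := mem_image.1 hv
      exact hae i
    · rw [card_image_of_injective _ ha, hF3 e he, card_univ, Fintype.card_fin]
  have hmem : ∀ i, h (a i) ∈ P i := fun i => by simpa only [h, hfa] using hg (f (a i)) (a i)
  rw [he_eq, image_image, Fin.univ_image_three]
  exact hE _ (hmem 0) _ (hmem 1) _ (hmem 2)

section MinPosCoDeg

variable {n : ℕ} {E : Finset (Finset (Fin n))}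

theorem coDeg_le_card_link (h3 : ∀ e ∈ E, #e = 3) {S : Finset (Fin n)} (hS : #S = 2) :
    coDeg E S ≤ #(link E S) := by
  refine (card_le_card fun e he => ?_).trans (card_image_le (f := (insert · S)))
  obtain ⟨heE, hSe⟩ := mem_filter.1 he
  obtain ⟨v, hv⟩ := card_eq_one.1 (show #(e \ S) = 1 by rw [card_sdiff_of_subset hSe, h3 e heE, hS])
  have hve : insert v S = e := by rw [insert_eq, ← hv, sdiff_union_of_subset hSe]
  have hvS : v ∉ S := fun h => by simpa [h] using (hv ▸ mem_singleton_self v : v ∈ e \ S)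
  exact mem_image.2 ⟨v, mem_link.2 ⟨hvS, hve ▸ heE⟩, hve⟩

theorem coDeg_mem_posCoDegs (h3 : ∀ e ∈ E, #e = 3) {a b v : Fin n} (hv : v ∈ link E {a, b}) :
    coDeg E {a, b} ∈ {d | ∃ S : Finset (Fin n), #S = 3 - 1 ∧ coDeg E S = d ∧ 0 < d} :=
  ⟨_, card_pair (ne_of_mem_link h3 hv), rfl,
    card_pos.2 ⟨_, mem_filter.2 ⟨(mem_link.1 hv).2, subset_insert _ _⟩⟩⟩

theorem minPosCoDeg_le_card_link (h3 : ∀ e ∈ E, #e = 3) {a b : Fin n}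
    (hab : (link E {a, b}).Nonempty) : minPosCoDeg 3 n E ≤ #(link E {a, b}) :=
  let ⟨_, hv⟩ := hab
  (Nat.sInf_le (coDeg_mem_posCoDegs h3 hv)).trans
    (coDeg_le_card_link h3 (card_pair (ne_of_mem_link h3 hv)))

theorem minPosCoDeg_le (h3 : ∀ e ∈ E, #e = 3) (hE : E.Nonempty) : minPosCoDeg 3 n E ≤ n :=
  let ⟨_, _, hab⟩ := exists_link_nonempty h3 hE
  (minPosCoDeg_le_card_link h3 hab).trans ((card_le_univ _).trans_eq (Fintype.card_fin n))

theorem le_minPosCoDeg_s17 {k : ℕ} (h3 : ∀ e ∈ E, #e = 3) (hE : E.Nonempty)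
    (hk : ∀ S, #S = 2 → 0 < coDeg E S → k ≤ coDeg E S) :
    k ≤ minPosCoDeg 3 n E := by
  obtain ⟨_, _, _, hv⟩ := exists_link_nonempty h3 hE
  refine le_csInf ⟨_, coDeg_mem_posCoDegs h3 hv⟩ ?_
  rintro _ ⟨S, hS, rfl, hpos⟩
  exact hk S hS hpos

end MinPosCoDeg

section CoPlusEx

variable {α : Type*} [DecidableEq α] {F : Finset (Finset α)} {n : ℕ}

theorem coPlusEx_le_of_forall {b : ℕ}
    (hb : ∀ E : Finset (Finset (Fin n)), (∀ e ∈ E, #e = 3) → E.Nonempty → ¬ Contains F E →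
      minPosCoDeg 3 n E ≤ b) :
    coPlusEx 3 n F ≤ b :=
  csSup_le' fun _ ⟨E, h3, hE, hfree, hd⟩ => hd ▸ hb E h3 hE hfree

theorem coPlusEx_le_self : coPlusEx 3 n F ≤ n :=
  coPlusEx_le_of_forall fun _ h3 hE _ => minPosCoDeg_le h3 hE

theorem minPosCoDeg_le_coPlusEx {E : Finset (Finset (Fin n))} (h3 : ∀ e ∈ E, #e = 3)
    (hE : E.Nonempty) (hfree : ¬ Contains F E) : minPosCoDeg 3 n E ≤ coPlusEx 3 n F :=
  le_csSup ⟨n, fun _ ⟨_, h3, hE, _, hd⟩ => hd ▸ minPosCoDeg_le h3 hE⟩ ⟨E, h3, hE, hfree, rfl⟩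

end CoPlusEx

theorem pow_le_of_mul_rpow_lt {c n d K : ℕ} (hn : 1 ≤ n) (hK : 1 ≤ K)
    (h : (c : ℝ) * (n : ℝ) ^ (1 - 1 / (K : ℝ)) < d) : c ≤ d ∧ c * n ^ (K - 1) ≤ d ^ K := by
  have hK' : (1 : ℝ) ≤ K := by exact_mod_cast hK
  have hexp : 0 ≤ 1 - 1 / (K : ℝ) := by
    rw [sub_nonneg, div_le_one (by positivity)]; exact hK'
  have hrpow : (1 : ℝ) ≤ (n : ℝ) ^ (1 - 1 / (K : ℝ)) :=
    Real.one_le_rpow (by exact_mod_cast hn) hexp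
  refine ⟨by exact_mod_cast (le_mul_of_one_le_right (Nat.cast_nonneg c) hrpow).trans h.le, ?_⟩
  have hpow : ((c : ℝ) * (n : ℝ) ^ (1 - 1 / (K : ℝ))) ^ K = ((c ^ K * n ^ (K - 1) : ℕ) : ℝ) := by
    rw [mul_pow, ← Real.rpow_natCast ((n : ℝ) ^ _), ← Real.rpow_mul (Nat.cast_nonneg n)]
    have : (1 - 1 / (K : ℝ)) * K = ((K - 1 : ℕ) : ℝ) := by
      rw [Nat.cast_sub hK, Nat.cast_one]; field_simp
    rw [this, Real.rpow_natCast]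
    push_cast; ring
  have hlt : c ^ K * n ^ (K - 1) < d ^ K := by
    exact_mod_cast hpow ▸ pow_lt_pow_left₀ h (by positivity) (by omega)
  refine le_trans ?_ hlt.le
  gcongr
  exact Nat.le_self_pow (by omega) c

theorem minPosCoDeg_le_mul_rpow {α : Type*} [Fintype α] [DecidableEq α] {F : Finset (Finset α)}
    (hF3 : ∀ e ∈ F, #e = 3) {f : α → Fin 3} (hf : ∀ e ∈ F, #(e.image f) = 3)
    {s : ℕ} (hs : 1 ≤ s) (hαs : Fintype.card α ≤ s) {n : ℕ} (hn : 1 ≤ n)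
    {E : Finset (Finset (Fin n))} (h3 : ∀ e ∈ E, #e = 3) (hE : E.Nonempty)
    (hfree : ¬ Contains F E) :
    (minPosCoDeg 3 n E : ℝ) ≤
      ((2 ^ s * s * (2 ^ (s + 1)) ^ s : ℕ) : ℝ) * (n : ℝ) ^ (1 - 1 / (((s + 2) * s : ℕ) : ℝ)) := by
  by_contra! hlt
  obtain ⟨hcd, hpow⟩ := pow_le_of_mul_rpow_lt hn (by nlinarith) hlt
  have h2s : 2 * s ≤ minPosCoDeg 3 n E := by
    refine le_trans ?_ hcd
    calc 2 * s ≤ 2 ^ s * s * 1 := by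
          rw [mul_one]; gcongr; exact Nat.le_self_pow (by omega) 2
      _ ≤ 2 ^ s * s * (2 ^ (s + 1)) ^ s := by gcongr; exact Nat.one_le_pow _ _ (by positivity)
  have hdense : 2 ^ s * s * n ^ (s - 1) * (2 ^ (s + 1) * n ^ (s + 1)) ^ s ≤
      ((minPosCoDeg 3 n E) ^ (s + 2)) ^ s := by
    convert hpow using 1
    · obtain ⟨t, rfl⟩ : ∃ t, s = t + 1 := ⟨s - 1, by omega⟩
      rw [Nat.add_sub_cancel, show (t + 1 + 2) * (t + 1) - 1 = t + (t + 1 + 1) * (t + 1) by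
        ring_nf; omega]
      ring
    · rw [← pow_mul]
  obtain ⟨X, Y, Z, hX, hY, hZ, hXY, hXZ, hYZ, hXYZ⟩ :=
    exists_completeTripartite_of_le_card_link h3 hE
      (fun a b hab => minPosCoDeg_le_card_link h3 hab) hs h2s (by simpa using hdense)
  exact hfree (contains_of_completeTripartite hF3 hf (hX ▸ hαs) (hY ▸ hαs) (hZ ▸ hαs)
    hXY hXZ hYZ hXYZ)

theorem coPlusEx_le_mul_rpow {α : Type*} [Fintype α] [DecidableEq α] {F : Finset (Finset α)}
    (hF3 : ∀ e ∈ F, #e = 3) {f : α → Fin 3} (hf : ∀ e ∈ F, #(e.image f) = 3)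
    {s : ℕ} (hs : 1 ≤ s) (hαs : Fintype.card α ≤ s) {n : ℕ} (hn : 1 ≤ n) :
    (coPlusEx 3 n F : ℝ) ≤
      ((2 ^ s * s * (2 ^ (s + 1)) ^ s : ℕ) : ℝ) * (n : ℝ) ^ (1 - 1 / (((s + 2) * s : ℕ) : ℝ)) :=
  (Nat.cast_le.2 (coPlusEx_le_of_forall fun _ h3 hE hfree =>
    Nat.le_floor (minPosCoDeg_le_mul_rpow hF3 hf hs hαs hn h3 hE hfree))).trans
    (Nat.floor_le (by positivity))

section Rainbow

variable {V : Type*} [Fintype V]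

def rainbowTriples (c : V → Fin 3) : Finset (Finset V) :=
  {e ∈ powersetCard 3 univ | #(e.image c) = 3}

@[simp]
theorem mem_rainbowTriples {c : V → Fin 3} {e : Finset V} :
    e ∈ rainbowTriples c ↔ #e = 3 ∧ #(e.image c) = 3 := by
  simp [rainbowTriples]

theorem rainbowTriples_nonempty [DecidableEq V] {c : V → Fin 3} (hc : Function.Surjective c) :
    (rainbowTriples c).Nonempty := by
  choose w hw using hc
  have hcw : c ∘ w = id := funext hw
  have hinj : Function.Injective w := Function.LeftInverse.injective hw
  refine ⟨univ.image w, mem_rainbowTriples.2 ⟨?_, ?_⟩⟩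
  · rw [card_image_of_injective _ hinj, card_univ, Fintype.card_fin]
  · rw [image_image, hcw, image_id, card_univ, Fintype.card_fin]

theorem exists_threePartite_of_contains_rainbowTriples [DecidableEq V] {α : Type*} [DecidableEq α]
    {F : Finset (Finset α)} {c : V → Fin 3} (h : Contains F (rainbowTriples c)) :
    ∃ f : α → Fin 3, ∀ e ∈ F, #(e.image f) = 3 := by
  obtain ⟨φ, -, hφ⟩ := h
  refine ⟨c ∘ φ, fun e he => ?_⟩
  rw [← image_image]
  exact (mem_rainbowTriples.1 (hφ e he)).2

end Rainbow

theorem le_coDeg_rainbowTriples {n k : ℕ} {c : Fin n → Fin 3}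
    (hk : ∀ i, k ≤ #{v | c v = i}) {S : Finset (Fin n)} (hS : #S = 2)
    (hpos : 0 < coDeg (rainbowTriples c) S) : k ≤ coDeg (rainbowTriples c) S := by
  obtain ⟨e, heS⟩ := card_pos.1 hpos
  obtain ⟨he, hSe⟩ := mem_filter.1 heS
  obtain ⟨u, v, huv, rfl⟩ := card_eq_two.1 hS
  have hinj : Set.InjOn c e :=
    card_image_iff.1 (by rw [(mem_rainbowTriples.1 he).2, (mem_rainbowTriples.1 he).1])
  have hcuv : c u ≠ c v := fun h => huv (hinj (hSe (by simp)) (hSe (by simp)) h)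
  obtain ⟨i, hiu, hiv⟩ : ∃ i, i ≠ c u ∧ i ≠ c v :=
    (by decide : ∀ a b : Fin 3, ∃ i, i ≠ a ∧ i ≠ b) _ _
  have hout : ∀ w ∈ ({w | c w = i} : Finset (Fin n)), w ∉ ({u, v} : Finset (Fin n)) := by
    intro w hw huvw
    have hw : c w = i := (mem_filter.1 hw).2
    rcases mem_insert.1 huvw with rfl | hwv
    · exact hiu hw.symm
    · exact hiv (mem_singleton.1 hwv ▸ hw).symm
  refine (hk i).trans (card_le_card_of_injOn (insert · {u, v}) (fun w hw => ?_)
    fun w hw w' _ h => (insert_inj (hout w hw)).1 h)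
  refine mem_filter.2 ⟨mem_rainbowTriples.2 ⟨?_, ?_⟩, subset_insert _ _⟩
  · rw [card_insert_of_notMem (hout w hw), card_pair huv]
  · rw [image_insert, image_insert, image_singleton, (mem_filter.1 hw).2]
    exact card_eq_three.2 ⟨i, c u, c v, hiu, hiv, hcuv, rfl⟩

theorem div_three_le_card_fiber_ofNat_three (n : ℕ) (i : Fin 3) :
    n / 3 ≤ #{v : Fin n | Fin.ofNat 3 v = i} := by
  refine (card_fin (n / 3)).symm.le.trans
    (card_le_card_of_injOn (fun j => ⟨3 * j + i, by omega⟩) (fun j _ => ?_) ?_)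
  · simp [Fin.ext_iff, Nat.add_mod]
  · intro j _ j' _ h
    simp only [Fin.mk.injEq] at h
    exact Fin.ext (by omega)

theorem surjective_ofNat_three {n : ℕ} (hn : 3 ≤ n) :
    Function.Surjective fun v : Fin n => Fin.ofNat 3 v :=
  fun i => ⟨⟨i, by omega⟩, by simp⟩

theorem div_three_le_minPosCoDeg_rainbowTriples {n : ℕ} (hn : 3 ≤ n) :
    n / 3 ≤ minPosCoDeg 3 n (rainbowTriples fun v : Fin n => Fin.ofNat 3 v) :=
  le_minPosCoDeg_s17 (fun _ he => (mem_rainbowTriples.1 he).1)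
    (rainbowTriples_nonempty (surjective_ofNat_three hn))
    fun _ hS hpos => le_coDeg_rainbowTriples (div_three_le_card_fiber_ofNat_three n) hS hpos

theorem div_three_le_coPlusEx {α : Type*} [DecidableEq α] {F : Finset (Finset α)}
    (hF : ¬ ∃ f : α → Fin 3, ∀ e ∈ F, #(e.image f) = 3) {n : ℕ} (hn : 3 ≤ n) :
    n / 3 ≤ coPlusEx 3 n F :=
  (div_three_le_minPosCoDeg_rainbowTriples hn).trans <| minPosCoDeg_le_coPlusEx
    (fun _ he => (mem_rainbowTriples.1 he).1)
    (rainbowTriples_nonempty (surjective_ofNat_three hn))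
    fun h => hF (exists_threePartite_of_contains_rainbowTriples h)

/-- Dichotomy for 3-graphs `F`: if `F` is 3-partite then `co⁺ex(n, F) = O(n^(1-ε))`
for some `ε > 0`; otherwise `co⁺ex(n, F) ≥ ⌊n/3⌋` for all `n ≥ 3`, and in particular
`co⁺ex(n, F) = Θ(n)`. -/
theorem coPlusEx_threePartite_dichotomy {α : Type} [Fintype α] [DecidableEq α]
    (F : Finset (Finset α)) (hcard : ∀ e ∈ F, e.card = 3) (hne : F.Nonempty) :
    ((∃ f : α → Fin 3, ∀ e ∈ F, (e.image f).card = 3) →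
      ∃ ε C : ℝ, 0 < ε ∧ 0 < C ∧ ∀ n : ℕ, 3 ≤ n →
        (coPlusEx 3 n F : ℝ) ≤ C * (n : ℝ) ^ ((1 : ℝ) - ε)) ∧
    (¬ (∃ f : α → Fin 3, ∀ e ∈ F, (e.image f).card = 3) →
      (∀ n : ℕ, 3 ≤ n → n / 3 ≤ coPlusEx 3 n F) ∧
      ∃ c C : ℝ, 0 < c ∧ 0 < C ∧ ∀ n : ℕ, 3 ≤ n →
        c * (n : ℝ) ≤ (coPlusEx 3 n F : ℝ) ∧ (coPlusEx 3 n F : ℝ) ≤ C * n) := by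
  refine ⟨fun ⟨f, hf⟩ => ?_, fun hF => ⟨fun n hn => div_three_le_coPlusEx hF hn,
    1 / 9, 1, by norm_num, one_pos, fun n hn => ⟨?_, ?_⟩⟩⟩
  · set s := Fintype.card α
    have hs : 1 ≤ s := by
      obtain ⟨e, he⟩ := hne
      exact (by omega : 1 ≤ 3).trans ((hcard e he).symm.le.trans (card_le_univ e))
    exact ⟨_, _, one_div_pos.2 (Nat.cast_pos.2 (Nat.mul_pos (by omega) hs)),
      Nat.cast_pos.2 (Nat.mul_pos (Nat.mul_pos (by positivity) hs) (by positivity)),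
      fun n hn => coPlusEx_le_mul_rpow hcard hf hs le_rfl (by omega)⟩
  · have : (n : ℝ) ≤ 9 * coPlusEx 3 n F := by
      exact_mod_cast (by have := div_three_le_coPlusEx hF hn; omega)
    linarith
  · rw [one_mul]; exact_mod_cast coPlusEx_le_self
end
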